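/- arXiv:1007.2239 — 9 statements merged into one kernel-verified Lean document; each statement's English description precedes it below -/
import Mathlib

section
/- Let n ≥ 2 be an integer and let R_∞ = ℤ[x_1, x_2, x_3, ...] be the ring of polynomials with integer coefficients in countably many commuting indeterminates. Then there is no integer v ≥ 1 such that every element f of the subring J(2^n, R_∞) of R_∞ generated by all 2^n-th powers can be written in the form f = Σ_{i=1}^v ε_i f_i^{2^n} for some f_1, ..., f_v ∈ R_∞ and signs ε_i ∈ {+1, −1}. Equivalently, v(2^n, R_∞) = ∞. -/
/-!
Suppose `∑_{j ≤ v} x_j^{2^n} = ∑_{i < v} ε_i g_i^{2^n}`. The Frobenius congruence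
`g^2 ≡ g(x²) mod 2` lifts to `g^{2^{k+1}} ≡ (g^{2^k})(x²) mod 2^{k+1}`, so descending from `k = n`
the signed sums of `2^k`-th powers on both sides agree modulo `2^{k+1}` for every `k ≤ n`.
Comparing the coefficients of `x_a` and `x_a x_b` for `k = 0, 1, 2` shows that the vectors
`(evenLinearCoeff g_i a)_{i < v} ∈ 𝔽₂^v` are orthonormal for `a ≤ v`. Hence `v + 1 ≤ v`.
-/

open MvPolynomial Finsupp

theorem sum_intCast_mul_eq_zero_of_dvd {ι : Type*} [Fintype ι] {N : ℤ} (hN : N ≠ 0)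
    (c x : ι → ℤ) (h : N * 2 ∣ ∑ i, c i * (N * x i)) : ∑ i, (c i : ZMod 2) * x i = 0 := by
  have h' : N * 2 ∣ N * ∑ i, c i * x i := by
    simpa only [Finset.mul_sum, mul_left_comm N] using h
  exact_mod_cast (ZMod.intCast_zmod_eq_zero_iff_dvd _ 2).mpr (Int.dvd_of_mul_dvd_mul_left hN h')

theorem Matrix.card_le_card_of_mul_eq_one {m n R : Type*} [Fintype m] [Fintype n]
    [DecidableEq m] [CommSemiring R] [StrongRankCondition R] {A : Matrix m n R}
    {B : Matrix n m R} (h : A * B = 1) : Fintype.card m ≤ Fintype.card n := by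
  simpa [h] using (A.rank_mul_le_left B).trans A.rank_le_card_width

namespace MvPolynomial

variable {σ R : Type*} [CommRing R]

theorem constantCoeff_pderiv [DecidableEq σ] (a : σ) (F : MvPolynomial σ R) :
    constantCoeff (pderiv a F) = coeff (single a 1) F := by
  simpa [constantCoeff_eq] using coeff_pderiv F 0

theorem coeff_single_mul (a : σ) (P Q : MvPolynomial σ R) :
    coeff (single a 1) (P * Q) =
      constantCoeff P * coeff (single a 1) Q + coeff (single a 1) P * constantCoeff Q := by
  classical
  simp only [← constantCoeff_pderiv, Derivation.leibniz, smul_eq_mul, map_add, map_mul]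
  ring

theorem coeff_single_add_single_mul {a b : σ} (hab : a ≠ b) (P Q : MvPolynomial σ R) :
    coeff (single a 1 + single b 1) (P * Q) =
      constantCoeff P * coeff (single a 1 + single b 1) Q
        + coeff (single a 1) P * coeff (single b 1) Q
        + coeff (single b 1) P * coeff (single a 1) Q
        + coeff (single a 1 + single b 1) P * constantCoeff Q := by
  classical
  have h (F : MvPolynomial σ R) :
      coeff (single a 1 + single b 1) F = coeff (single b 1) (pderiv a F) := by
    simp [coeff_pderiv, hab, add_comm]
  simp only [h, Derivation.leibniz, smul_eq_mul, coeff_add, coeff_single_mul,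
    constantCoeff_pderiv]
  ring

theorem coeff_single_sq (a : σ) (P : MvPolynomial σ R) :
    coeff (single a 1) (P ^ 2) = 2 * constantCoeff P * coeff (single a 1) P := by
  rw [sq, coeff_single_mul]
  ring

theorem coeff_single_pow_four (a : σ) (P : MvPolynomial σ R) :
    coeff (single a 1) (P ^ 4) = 4 * (constantCoeff P ^ 3 * coeff (single a 1) P) := by
  rw [show P ^ 4 = (P ^ 2) ^ 2 by ring, coeff_single_sq, coeff_single_sq, map_pow]
  ring

theorem coeff_single_add_single_sq {a b : σ} (hab : a ≠ b) (P : MvPolynomial σ R) :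
    coeff (single a 1 + single b 1) (P ^ 2) =
      2 * (constantCoeff P * coeff (single a 1 + single b 1) P
        + coeff (single a 1) P * coeff (single b 1) P) := by
  rw [sq, coeff_single_add_single_mul hab]
  ring

theorem coeff_single_add_single_pow_four {a b : σ} (hab : a ≠ b) (P : MvPolynomial σ R) :
    coeff (single a 1 + single b 1) (P ^ 4) =
      4 * (constantCoeff P ^ 3 * coeff (single a 1 + single b 1) P
        + 3 * constantCoeff P ^ 2 * coeff (single a 1) P * coeff (single b 1) P) := by
  rw [show P ^ 4 = (P ^ 2) ^ 2 by ring, coeff_single_add_single_sq hab,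
    coeff_single_add_single_sq hab, coeff_single_sq, coeff_single_sq, map_pow]
  ring

theorem C_dvd_of_C_dvd_expand {p : ℕ} (hp : p ≠ 0) {r : R} {φ : MvPolynomial σ R}
    (h : C r ∣ expand p φ) : C r ∣ φ := by
  rw [C_dvd_iff_dvd_coeff] at h ⊢
  intro m
  simpa [hp] using h (p • m)

theorem C_two_pow_succ_dvd_pow_sub_expand (g : MvPolynomial σ ℤ) (k : ℕ) :
    C (2 ^ (k + 1)) ∣ g ^ 2 ^ (k + 1) - expand 2 (g ^ 2 ^ k) := by
  have frobenius : ((2 : ℕ) : MvPolynomial σ ℤ) ∣ g ^ 2 - expand 2 g := by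
    rw [← map_natCast C, C_dvd_iff_zmod]
    simp [expand_zmod]
  simpa [← pow_mul, ← pow_succ'] using dvd_sub_pow_of_dvd_sub frobenius k

theorem C_two_pow_succ_dvd_sum_of_sum_eq_zero {ι : Type*} [Fintype ι] (c : ι → ℤ)
    (f : ι → MvPolynomial σ ℤ) {n : ℕ} (h : ∑ i, C (c i) * f i ^ 2 ^ n = 0) {k : ℕ}
    (hk : k ≤ n) : C (2 ^ (k + 1)) ∣ ∑ i, C (c i) * f i ^ 2 ^ k := by
  induction hk using Nat.decreasingInduction with
  | self => rw [h]; exact dvd_zero _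
  | of_succ k _ ih =>
    have h_succ : C (2 ^ (k + 1)) ∣ ∑ i, C (c i) * f i ^ 2 ^ (k + 1) :=
      dvd_trans (map_dvd C (pow_dvd_pow 2 k.succ.le_succ)) ih
    have h_sub : C (2 ^ (k + 1)) ∣
        ∑ i, C (c i) * f i ^ 2 ^ (k + 1) - expand 2 (∑ i, C (c i) * f i ^ 2 ^ k) := by
      simp only [map_sum, map_mul, expand_C, ← Finset.sum_sub_distrib, ← mul_sub]
      exact Finset.dvd_sum fun i _ => (C_two_pow_succ_dvd_pow_sub_expand (f i) k).mul_left _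
    exact C_dvd_of_C_dvd_expand two_ne_zero ((dvd_sub_right h_succ).mp h_sub)

/-- The `x_a`-coefficient of `f` modulo 2 if the constant term of `f` is even, and `0` if it is
odd. -/
noncomputable def evenLinearCoeff (f : MvPolynomial σ ℤ) (a : σ) : ZMod 2 :=
  (1 + ((constantCoeff f : ℤ) : ZMod 2)) * ((coeff (single a 1) f : ℤ) : ZMod 2)

theorem sum_mul_evenLinearCoeff_eq_zero {ι : Type*} [Fintype ι] (c : ι → ℤ)
    (f : ι → MvPolynomial σ ℤ) {n : ℕ} (hn : 2 ≤ n) (h : ∑ i, C (c i) * f i ^ 2 ^ n = 0)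
    (a b : σ) :
    ∑ i, (c i : ZMod 2) * (evenLinearCoeff (f i) a * evenLinearCoeff (f i) b) = 0 := by
  have hdvd (k : ℕ) (hk : k ≤ n) (m : σ →₀ ℕ) :
      2 ^ (k + 1) ∣ ∑ i, c i * coeff m (f i ^ 2 ^ k) := by
    have := (C_dvd_iff_dvd_coeff _ _).mp (C_two_pow_succ_dvd_sum_of_sum_eq_zero c f h hk) m
    simpa only [coeff_sum, coeff_C_mul] using this
  simp only [evenLinearCoeff]
  obtain rfl | hab := eq_or_ne a b
  · have h0 := hdvd 0 (by omega) (single a 1)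
    have h2 := hdvd 2 hn (single a 1)
    simp only [pow_zero, pow_one, zero_add] at h0
    simp only [Nat.reducePow, coeff_single_pow_four] at h2
    have h0' := (ZMod.intCast_zmod_eq_zero_iff_dvd _ 2).mpr h0
    have h2' := sum_intCast_mul_eq_zero_of_dvd (N := 4) (by norm_num) _ _ h2
    push_cast at h0' h2'
    have key (c t u : ZMod 2) : c * ((1 + t) * u * ((1 + t) * u)) = c * u + c * (t ^ 3 * u) := by
      decide +revert
    simp only [key, Finset.sum_add_distrib, h0', h2', add_zero]
  · have h1 := hdvd 1 (by omega) (single a 1 + single b 1)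
    have h2 := hdvd 2 hn (single a 1 + single b 1)
    simp only [Nat.reducePow, coeff_single_add_single_sq hab,
      coeff_single_add_single_pow_four hab] at h1 h2
    have h1' := sum_intCast_mul_eq_zero_of_dvd (N := 2) (by norm_num) _ _ h1
    have h2' := sum_intCast_mul_eq_zero_of_dvd (N := 4) (by norm_num) _ _ h2
    push_cast at h1' h2'
    have key (c t u u' p : ZMod 2) : c * ((1 + t) * u * ((1 + t) * u')) =
        c * (t * p + u * u') + c * (t ^ 3 * p + 3 * t ^ 2 * u * u') := by
      decide +revert
    rw [Finset.sum_congr rfl fun i _ =>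
      key _ _ _ _ ((coeff (single a 1 + single b 1) (f i) : ℤ) : ZMod 2)]
    rw [Finset.sum_add_distrib, h1', h2', add_zero]

theorem evenLinearCoeff_X_apply_of_injective {κ : Type*} [DecidableEq κ] {e : κ → σ}
    (he : e.Injective) (j a : κ) :
    evenLinearCoeff (X (e j) : MvPolynomial σ ℤ) (e a) = if j = a then 1 else 0 := by
  classical
  simp [evenLinearCoeff, coeff_X, single_left_inj, he.eq_iff]

theorem card_le_of_sum_X_pow_eq_sum_C_mul_pow {ι κ : Type*} [Fintype ι] [Fintype κ]
    {e : κ → σ} (he : e.Injective) {n : ℕ} (hn : 2 ≤ n) (η : ι → ℤ)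
    (hη : ∀ i, (η i : ZMod 2) = 1) (g : ι → MvPolynomial σ ℤ)
    (h : ∑ j, X (e j) ^ 2 ^ n = ∑ i, C (η i) * g i ^ 2 ^ n) :
    Fintype.card κ ≤ Fintype.card ι := by
  classical
  let c : ι ⊕ κ → ℤ := Sum.elim η fun _ => -1
  let F : ι ⊕ κ → MvPolynomial σ ℤ := Sum.elim g fun j => X (e j)
  have hzero : ∑ i, C (c i) * F i ^ 2 ^ n = 0 := by
    simp only [c, F, Fintype.sum_sum_type, Sum.elim_inl, Sum.elim_inr, ← h, map_neg,
      map_one, neg_one_mul, Finset.sum_neg_distrib, add_neg_cancel]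
  let M : Matrix κ ι (ZMod 2) := .of fun a i => evenLinearCoeff (g i) (e a)
  have hM : M * M.transpose = 1 := by
    ext a b
    have := sum_mul_evenLinearCoeff_eq_zero c F hn hzero (e a) (e b)
    simp only [Int.reduceNeg, Fintype.sum_sum_type, Sum.elim_inl, hη, one_mul, Sum.elim_inr,
      Int.cast_neg, Int.cast_one, ZMod.neg_eq_self_mod_two, evenLinearCoeff_X_apply_of_injective he,
      mul_ite, mul_one, mul_zero, Finset.sum_ite_eq', Finset.mem_univ, ↓reduceIte, c, F] at this
    simp only [Matrix.mul_apply, Matrix.of_apply, Matrix.transpose_apply, Matrix.one_apply, M]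
    grind
  exact Matrix.card_le_card_of_mul_eq_one hM

end MvPolynomial

/-- For `n ≥ 2`, there is no integer `v ≥ 1` such that every element of the subring
of `ℤ[x₁, x₂, …]` generated by all `2^n`-th powers is a signed sum of `v` `2^n`-th powers. -/
theorem stmt_0 (n : ℕ) (hn : 2 ≤ n) :
    ¬ ∃ v : ℕ, 1 ≤ v ∧
      ∀ f ∈ Subring.closure (Set.range fun g : MvPolynomial ℕ ℤ => g ^ (2 ^ n)),
        ∃ (g : Fin v → MvPolynomial ℕ ℤ) (ε : Fin v → MvPolynomial ℕ ℤ),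
          (∀ i, ε i = 1 ∨ ε i = -1) ∧ f = ∑ i, ε i * g i ^ (2 ^ n) := by
  rintro ⟨v, -, H⟩
  obtain ⟨g, ε, hε, hsum⟩ := H (∑ j : Fin (v + 1), X (j : ℕ) ^ 2 ^ n)
    (Subring.sum_mem _ fun j _ => Subring.subset_closure ⟨X j, rfl⟩)
  have hεC (i : Fin v) : ∃ e : ℤ, (e : ZMod 2) = 1 ∧ ε i = C e := by
    rcases hε i with h | h
    exacts [⟨1, by simp, by simp [h]⟩, ⟨-1, by decide, by simp [h]⟩]
  choose η hη_odd hη using hεC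
  have hcard := card_le_of_sum_X_pow_eq_sum_C_mul_pow Fin.val_injective hn η hη_odd g
    (by simpa only [hη] using hsum)
  simp at hcard
end

section
/- Let n ≥ 2 and m ≥ 2 be integers, let f ∈ R_m = ℤ[x_1, ..., x_m], and let 1 ≤ i < j ≤ m. Then 2^n divides the coefficient c_{f^{2^n}}(x_i x_j) of the monomial x_i x_j in the polynomial f^{2^n}. -/
/-!
For `i ≠ j` the coefficient of `x_i x_j` in `g` is the coefficient of `x_i` in `∂_j g`, and
`∂_j (f ^ N) = N f ^ (N - 1) ∂_j f`; so `N` divides the coefficient of `x_i x_j` in `f ^ N` for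
every `N`, in particular for `N = 2 ^ n`.
-/

open MvPolynomial Finsupp

namespace MvPolynomial

variable {σ R : Type*} [CommSemiring R]

theorem coeff_add_single_eq_coeff_pderiv {i : σ} {m : σ →₀ ℕ} (hm : m i = 0)
    (p : MvPolynomial σ R) : coeff (m + single i 1) p = coeff m (pderiv i p) := by
  rw [coeff_pderiv, hm, Nat.cast_zero, zero_add, mul_one]

theorem natCast_dvd_coeff_pderiv_pow (i : σ) (m : σ →₀ ℕ) (f : MvPolynomial σ R) (N : ℕ) :
    (N : R) ∣ coeff m (pderiv i (f ^ N)) := by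
  rw [pderiv_pow, mul_assoc, ← C_eq_coe_nat, coeff_C_mul]
  exact dvd_mul_right _ _

theorem natCast_dvd_coeff_single_add_single_pow {i j : σ} (hij : i ≠ j)
    (f : MvPolynomial σ R) (N : ℕ) :
    (N : R) ∣ coeff (single i 1 + single j 1) (f ^ N) := by
  rw [coeff_add_single_eq_coeff_pderiv (single_eq_of_ne hij.symm)]
  exact natCast_dvd_coeff_pderiv_pow j _ f N

end MvPolynomial

theorem stmt_2_general (n m : ℕ)
    (f : MvPolynomial (Fin m) ℤ) (i j : Fin m) (hij : i < j) :
    (2 : ℤ) ^ n ∣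
      MvPolynomial.coeff (Finsupp.single i 1 + Finsupp.single j 1) (f ^ 2 ^ n) := by
  exact_mod_cast natCast_dvd_coeff_single_add_single_pow hij.ne f (2 ^ n)

/-- For `n ≥ 2` and `i < j`, `2^n` divides the coefficient of `x_i x_j` in `f^(2^n)`. -/
theorem stmt_2 (n m : ℕ) (hn : 2 ≤ n) (hm : 2 ≤ m)
    (f : MvPolynomial (Fin m) ℤ) (i j : Fin m) (hij : i < j) :
    (2 : ℤ) ^ n ∣
      MvPolynomial.coeff (Finsupp.single i 1 + Finsupp.single j 1) (f ^ 2 ^ n) :=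
  stmt_2_general n m f i j hij
end

section
/- Let n ≥ 2 and m ≥ 2 be integers, let f ∈ R_m = ℤ[x_1, ..., x_m], and let 1 ≤ i < j ≤ m. Then 2 divides the coefficient c_{f^{2^n}}(x_i^{2^{n−1}} x_j^{2^{n−1}}) of the monomial x_i^{2^{n−1}} x_j^{2^{n−1}} in the polynomial f^{2^n}. -/
namespace MvPolynomial

/-- In characteristic `p`, `f ^ p ^ n` is the `p ^ n`-fold expansion of `f` with Frobenius-twisted
coefficients. -/
theorem coeff_pow_expChar_pow_of_not_dvd {σ R : Type*} [CommSemiring R] (p : ℕ) [ExpChar R p]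
    (f : MvPolynomial σ R) (n : ℕ) {d : σ →₀ ℕ} {i : σ} (h : ¬ p ^ n ∣ d i) :
    coeff d (f ^ p ^ n) = 0 := by
  rw [← map_iterateFrobenius_expand, coeff_map, coeff_expand_of_not_dvd f h, map_zero]

theorem two_dvd_coeff_pow_two_pow_of_not_dvd {σ : Type*} (f : MvPolynomial σ ℤ) (n : ℕ)
    {d : σ →₀ ℕ} {i : σ} (h : ¬ 2 ^ n ∣ d i) :
    (2 : ℤ) ∣ coeff d (f ^ 2 ^ n) := by
  have hmod : ((coeff d (f ^ 2 ^ n) : ℤ) : ZMod 2) = 0 := by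
    rw [← eq_intCast (Int.castRingHom (ZMod 2)), ← coeff_map, map_pow]
    exact coeff_pow_expChar_pow_of_not_dvd 2 _ n h
  exact_mod_cast (ZMod.intCast_zmod_eq_zero_iff_dvd _ 2).mp hmod

end MvPolynomial

theorem stmt_3_general (n m : ℕ) (hn : 2 ≤ n)
    (f : MvPolynomial (Fin m) ℤ) (i j : Fin m) (hij : i < j) :
    (2 : ℤ) ∣
      MvPolynomial.coeff
        (Finsupp.single i (2 ^ (n - 1)) + Finsupp.single j (2 ^ (n - 1))) (f ^ 2 ^ n) := by
  apply MvPolynomial.two_dvd_coeff_pow_two_pow_of_not_dvd f n (i := i)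
  rw [Finsupp.add_apply, Finsupp.single_eq_same, Finsupp.single_eq_of_ne hij.ne, add_zero,
    Nat.pow_dvd_pow_iff_le_right one_lt_two]
  omega

/-- For `n ≥ 2` and `i < j`, `2` divides the coefficient of
`x_i^(2^(n-1)) x_j^(2^(n-1))` in `f^(2^n)`. -/
theorem stmt_3 (n m : ℕ) (hn : 2 ≤ n) (hm : 2 ≤ m)
    (f : MvPolynomial (Fin m) ℤ) (i j : Fin m) (hij : i < j) :
    (2 : ℤ) ∣
      MvPolynomial.coeff
        (Finsupp.single i (2 ^ (n - 1)) + Finsupp.single j (2 ^ (n - 1))) (f ^ 2 ^ n) :=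
  stmt_3_general n m hn f i j hij
end

section
/- Let n ≥ 2 and m ≥ 2 be integers, let f ∈ R_m = ℤ[x_1, ..., x_m], and let 1 ≤ i < j ≤ m. Then c_{f^{2^n}}(x_i x_j)/2^n and c_{f^{2^n}}(x_i^{2^{n−1}} x_j^{2^{n−1}})/2 are integers, and they satisfy the congruence c_{f^{2^n}}(x_i x_j)/2^n + c_{f^{2^n}}(x_i^{2^{n−1}} x_j^{2^{n−1}})/2 ≡ (c_f(1) + 1) · c_f(x_i) · c_f(x_j) (mod 2), where c_f(1) is the constant term of f and c_f(x_i), c_f(x_j) are the coefficients of x_i and x_j in f. -/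
/-!
Write `a, b, c, d` for the coefficients of `1, x_i, x_j, x_i x_j` in `f`. The coefficients of
`x_i` and `x_i x_j` are the constant terms of `∂_i` and `∂_i ∂_j`, so Leibniz' rule gives
`c_{f^N}(x_i x_j) = N a^{N-1} d + N (N-1) a^{N-2} b c`; for `N = 2^n` this is `2^n` times a
number congruent to `a d + a b c` modulo `2`.
For the other coefficient, `f^{2^{n-1}} ≡ expand (2^{n-1}) f (mod 2)` by Frobenius, so squaring
gives `f^{2^n} ≡ expand (2^{n-1}) (f^2) (mod 4)`, and the coefficient of
`x_i^{2^{n-1}} x_j^{2^{n-1}}` is congruent to `c_{f^2}(x_i x_j) = 2 (a d + b c)` modulo `4`.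
-/

open MvPolynomial Finsupp

variable {σ R : Type*}

section PDeriv

variable [CommSemiring R]

theorem coeff_single_eq_constantCoeff_pderiv (i : σ) (g : MvPolynomial σ R) :
    coeff (single i 1) g = constantCoeff (pderiv i g) := by
  rw [constantCoeff_eq, coeff_pderiv, zero_add]
  simp

theorem coeff_single_add_single_eq_constantCoeff_pderiv {i j : σ} (hij : i ≠ j)
    (g : MvPolynomial σ R) :
    coeff (single i 1 + single j 1) g = constantCoeff (pderiv i (pderiv j g)) := by
  rw [constantCoeff_eq, coeff_pderiv, zero_add, coeff_pderiv, single_eq_of_ne hij.symm]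
  simp

theorem coeff_single_add_single_pow {i j : σ} (hij : i ≠ j) (f : MvPolynomial σ R) (N : ℕ) :
    coeff (single i 1 + single j 1) (f ^ N) =
      N * coeff 0 f ^ (N - 1) * coeff (single i 1 + single j 1) f +
        N * (N - 1 : ℕ) * coeff 0 f ^ (N - 2) * coeff (single i 1) f * coeff (single j 1) f := by
  simp only [coeff_single_add_single_eq_constantCoeff_pderiv hij,
    coeff_single_eq_constantCoeff_pderiv, pderiv_pow, pderiv_mul, map_add, map_mul, map_pow,
    map_natCast, Derivation.map_natCast, map_zero, ← constantCoeff_eq, Nat.sub_sub]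
  ring

end PDeriv

section Frobenius

variable {p : ℕ} [Fact p.Prime]

theorem prime_dvd_pow_sub_expand (f : MvPolynomial σ ℤ) (k : ℕ) :
    (p : MvPolynomial σ ℤ) ∣ f ^ p ^ k - expand (p ^ k) f := by
  rw [← map_natCast C, C_dvd_iff_zmod, map_sub, map_pow, map_expand,
    ← map_iterateFrobenius_expand p]
  have : iterateFrobenius (ZMod p) p k = RingHom.id _ :=
    RingHom.ext fun x => by rw [iterateFrobenius_def, ZMod.pow_card_pow, RingHom.id_apply]
  rw [this, map_id, sub_self]

theorem prime_sq_dvd_pow_pow_succ_sub_expand (f : MvPolynomial σ ℤ) (k : ℕ) :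
    (p : MvPolynomial σ ℤ) ^ 2 ∣ f ^ p ^ (k + 1) - expand (p ^ k) (f ^ p) := by
  simpa only [pow_one, ← pow_mul, ← pow_succ, map_pow] using
    dvd_sub_pow_of_dvd_sub (prime_dvd_pow_sub_expand f k) 1

theorem coeff_smul_pow_pow_succ_modEq (f : MvPolynomial σ ℤ) (k : ℕ) (m : σ →₀ ℕ) :
    coeff m (f ^ p) ≡ coeff (p ^ k • m) (f ^ p ^ (k + 1)) [ZMOD (p : ℤ) ^ 2] := by
  have hpk : p ^ k ≠ 0 := pow_ne_zero _ ‹Fact p.Prime›.out.ne_zero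
  have := prime_sq_dvd_pow_pow_succ_sub_expand (p := p) f k
  rw [← map_natCast C, ← map_pow, C_dvd_iff_dvd_coeff] at this
  simpa only [Int.modEq_iff_dvd, coeff_sub, coeff_expand_smul _ hpk] using this (p ^ k • m)

end Frobenius

theorem coeff_single_two_pow_add_single_two_pow_modEq {i j : σ} (hij : i ≠ j)
    (f : MvPolynomial σ ℤ) (k : ℕ) :
    2 * (coeff 0 f * coeff (single i 1 + single j 1) f + coeff (single i 1) f * coeff (single j 1) f)
      ≡ coeff (single i (2 ^ k) + single j (2 ^ k)) (f ^ 2 ^ (k + 1)) [ZMOD 4] := by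
  have h := coeff_smul_pow_pow_succ_modEq (p := 2) f k (single i 1 + single j 1)
  rw [coeff_single_add_single_pow hij, smul_add, smul_single, smul_single, smul_eq_mul,
    mul_one] at h
  convert h using 1 <;> norm_num
  ring

theorem ZMod.pow_eq_self_of_ne_zero (x : ZMod 2) {N : ℕ} (hN : N ≠ 0) : x ^ N = x := by
  fin_cases x
  exacts [zero_pow hN, one_pow N]

theorem stmt_4_general (n m : ℕ) (hn : 2 ≤ n)
    (f : MvPolynomial (Fin m) ℤ) (i j : Fin m) (hij : i < j) :
    (2 : ℤ) ^ n ∣ MvPolynomial.coeff (Finsupp.single i 1 + Finsupp.single j 1) (f ^ 2 ^ n) ∧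
    (2 : ℤ) ∣ MvPolynomial.coeff
        (Finsupp.single i (2 ^ (n - 1)) + Finsupp.single j (2 ^ (n - 1))) (f ^ 2 ^ n) ∧
    MvPolynomial.coeff (Finsupp.single i 1 + Finsupp.single j 1) (f ^ 2 ^ n) / 2 ^ n +
        MvPolynomial.coeff
          (Finsupp.single i (2 ^ (n - 1)) + Finsupp.single j (2 ^ (n - 1))) (f ^ 2 ^ n) / 2 ≡
      (MvPolynomial.coeff 0 f + 1) * MvPolynomial.coeff (Finsupp.single i 1) f *
        MvPolynomial.coeff (Finsupp.single j 1) f [ZMOD 2] := by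
  obtain ⟨k, rfl⟩ : ∃ k, n = k + 1 := ⟨n - 1, by omega⟩
  set a := coeff 0 f
  set b := coeff (single i 1) f
  set c := coeff (single j 1) f
  set d := coeff (single i 1 + single j 1) f
  set u := a ^ (2 ^ (k + 1) - 1) * d + ((2 ^ (k + 1) - 1 : ℕ) : ℤ) * a ^ (2 ^ (k + 1) - 2) * b * c
    with hu_def
  have hu : coeff (single i 1 + single j 1) (f ^ 2 ^ (k + 1)) = 2 ^ (k + 1) * u := by
    rw [coeff_single_add_single_pow hij.ne]
    push_cast
    ring
  obtain ⟨s, hs⟩ := (coeff_single_two_pow_add_single_two_pow_modEq hij.ne f k).dvd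
  have hv : coeff (single i (2 ^ (k + 1 - 1)) + single j (2 ^ (k + 1 - 1))) (f ^ 2 ^ (k + 1)) =
      2 * (a * d + b * c + 2 * s) := by
    rw [add_tsub_cancel_right]
    linear_combination hs
  refine ⟨⟨u, hu⟩, ⟨_, hv⟩, ?_⟩
  rw [hu, hv, Int.mul_ediv_cancel_left _ (by positivity), Int.mul_ediv_cancel_left _ two_ne_zero]
  apply (ZMod.intCast_eq_intCast_iff _ _ 2).mp
  have h4 : 2 ^ 2 ≤ 2 ^ (k + 1) := Nat.pow_le_pow_right two_pos hn
  have h2 : (2 : ZMod 2) = 0 := rfl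
  rw [hu_def, Nat.cast_sub Nat.one_le_two_pow]
  push_cast
  rw [ZMod.pow_eq_self_of_ne_zero (a : ZMod 2) (by omega),
    ZMod.pow_eq_self_of_ne_zero (a : ZMod 2) (by omega), h2, zero_pow (Nat.succ_ne_zero k)]
  linear_combination (a * d - a * b * c : ZMod 2) * h2

/-- Lemma 2.1 of the paper: `c_{f^{2^n}}(x_i x_j)/2^n` and
`c_{f^{2^n}}(x_i^{2^{n-1}} x_j^{2^{n-1}})/2` are integers, and their sum is congruent
to `(c_f(1)+1)·c_f(x_i)·c_f(x_j)` modulo `2`. -/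
theorem stmt_4 (n m : ℕ) (hn : 2 ≤ n) (hm : 2 ≤ m)
    (f : MvPolynomial (Fin m) ℤ) (i j : Fin m) (hij : i < j) :
    (2 : ℤ) ^ n ∣ MvPolynomial.coeff (Finsupp.single i 1 + Finsupp.single j 1) (f ^ 2 ^ n) ∧
    (2 : ℤ) ∣ MvPolynomial.coeff
        (Finsupp.single i (2 ^ (n - 1)) + Finsupp.single j (2 ^ (n - 1))) (f ^ 2 ^ n) ∧
    MvPolynomial.coeff (Finsupp.single i 1 + Finsupp.single j 1) (f ^ 2 ^ n) / 2 ^ n +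
        MvPolynomial.coeff
          (Finsupp.single i (2 ^ (n - 1)) + Finsupp.single j (2 ^ (n - 1))) (f ^ 2 ^ n) / 2 ≡
      (MvPolynomial.coeff 0 f + 1) * MvPolynomial.coeff (Finsupp.single i 1) f *
        MvPolynomial.coeff (Finsupp.single j 1) f [ZMOD 2] :=
  stmt_4_general n m hn f i j hij
end

section
/- Let n ≥ 2 and m ≥ 2 be integers, let f ∈ R_m = ℤ[x_1, ..., x_m], and let 1 ≤ i < j ≤ m. Then the integer c_{f^{2^n}}(x_i^{2^{n−1}} x_j^{2^{n−1}})/2 satisfies the congruence c_{f^{2^n}}(x_i^{2^{n−1}} x_j^{2^{n−1}})/2 ≡ c_f(1) · c_f(x_i x_j) + c_f(x_i) · c_f(x_j) (mod 2). -/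
/-!
Write `N = 2 ^ (n - 1)`, `u = x_i x_j` and `expand N g = g(x_1 ^ N, …, x_m ^ N)`. Over `ZMod 2`
the Frobenius gives `f ^ N = expand N f`, so `f ^ N ≡ expand N f` modulo `2`, and squaring
improves this to `f ^ (2 N) ≡ expand N (f ^ 2)` modulo `4`. Hence the coefficient of `u ^ N` in
`f ^ (2 N)` is congruent modulo `4` to the coefficient of `u` in `f ^ 2`, which is exactly
`2 (c_f(1) c_f(x_i x_j) + c_f(x_i) c_f(x_j))`.
-/

variable {σ : Type*}

namespace Finsupp

theorem eq_single_add_single_of_apply_eq_zero [DecidableEq σ] {i j : σ} (hij : i ≠ j)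
    {a : σ →₀ ℕ} (h : ∀ k, k ≠ i → k ≠ j → a k = 0) :
    a = single i (a i) + single j (a j) := by
  ext k
  rcases eq_or_ne k i with rfl | hki
  · simp [hij.symm]
  rcases eq_or_ne k j with rfl | hkj
  · simp [hij]
  simp [hki.symm, hkj.symm, h k hki hkj]

theorem antidiagonal_single_add_single [DecidableEq σ] {i j : σ} (hij : i ≠ j) :
    Finset.HasAntidiagonal.antidiagonal (single i 1 + single j 1) =
      {(0, single i 1 + single j 1), (single i 1, single j 1), (single j 1, single i 1),
        (single i 1 + single j 1, 0)} := by
  ext ⟨a, b⟩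
  simp only [Finset.HasAntidiagonal.mem_antidiagonal, Finset.mem_insert, Finset.mem_singleton,
    Prod.mk.injEq]
  constructor
  · intro h
    have hk (k : σ) : a k + b k = (if i = k then 1 else 0) + (if j = k then 1 else 0) := by
      simpa [single_apply] using DFunLike.congr_fun h k
    have hi := hk i
    have hj := hk j
    simp only [if_true, hij, hij.symm, if_false, add_zero, zero_add] at hi hj
    rw [eq_single_add_single_of_apply_eq_zero hij (a := a) fun k hki hkj => by
          have := hk k; rw [if_neg hki.symm, if_neg hkj.symm] at this; omega,
        eq_single_add_single_of_apply_eq_zero hij (a := b) fun k hki hkj => by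
          have := hk k; rw [if_neg hki.symm, if_neg hkj.symm] at this; omega]
    rcases (by omega : a i = 0 ∧ b i = 1 ∨ a i = 1 ∧ b i = 0) with
      ⟨hai, hbi⟩ | ⟨hai, hbi⟩ <;>
    rcases (by omega : a j = 0 ∧ b j = 1 ∨ a j = 1 ∧ b j = 0) with
      ⟨haj, hbj⟩ | ⟨haj, hbj⟩ <;>
      simp [hai, hbi, haj, hbj, add_comm]
  · rintro (⟨rfl, rfl⟩ | ⟨rfl, rfl⟩ | ⟨rfl, rfl⟩ | ⟨rfl, rfl⟩) <;> simp [add_comm]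

end Finsupp

namespace MvPolynomial

open Finsupp

theorem coeff_single_add_single_sq_s7 {R : Type*} [CommSemiring R] {i j : σ} (hij : i ≠ j)
    (f : MvPolynomial σ R) :
    coeff (single i 1 + single j 1) (f ^ 2) =
      2 * (coeff 0 f * coeff (single i 1 + single j 1) f +
        coeff (single i 1) f * coeff (single j 1) f) := by
  classical
  have hi : single i 1 ≠ 0 := single_ne_zero.mpr one_ne_zero
  have hj : single j 1 ≠ 0 := single_ne_zero.mpr one_ne_zero
  have hij' : single i 1 ≠ single j 1 := by simp [single_eq_single_iff, hij]
  rw [sq, coeff_mul, antidiagonal_single_add_single hij, Finset.sum_insert, Finset.sum_insert,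
    Finset.sum_insert, Finset.sum_singleton]
  · ring
  all_goals simp [hi, hj, hij', hi.symm, hj.symm, hij'.symm]

theorem pow_prime_pow_zmod {p : ℕ} [Fact p.Prime] (k : ℕ) (f : MvPolynomial σ (ZMod p)) :
    f ^ p ^ k = expand (p ^ k) f := by
  induction k with
  | zero => simp
  | succ k ih => rw [pow_succ, pow_mul, ih, ← expand_zmod, ← expand_mul, mul_comm]

theorem prime_dvd_pow_prime_pow_sub_expand (p : ℕ) [Fact p.Prime] (k : ℕ)
    (f : MvPolynomial σ ℤ) : (p : MvPolynomial σ ℤ) ∣ f ^ p ^ k - expand (p ^ k) f := by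
  rw [← map_natCast C, C_dvd_iff_zmod, map_sub, map_pow, map_expand, pow_prime_pow_zmod,
    sub_self]

theorem sq_dvd_pow_prime_pow_succ_sub_expand (p : ℕ) [Fact p.Prime] (k : ℕ)
    (f : MvPolynomial σ ℤ) :
    (p : MvPolynomial σ ℤ) ^ 2 ∣ f ^ p ^ (k + 1) - expand (p ^ k) (f ^ p) := by
  simpa [← pow_mul, ← pow_succ] using
    dvd_sub_pow_of_dvd_sub (prime_dvd_pow_prime_pow_sub_expand p k f) 1

theorem coeff_smul_pow_prime_pow_succ_modEq (p : ℕ) [Fact p.Prime] (k : ℕ)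
    (f : MvPolynomial σ ℤ) (d : σ →₀ ℕ) :
    coeff (p ^ k • d) (f ^ p ^ (k + 1)) ≡ coeff d (f ^ p) [ZMOD p ^ 2] := by
  obtain ⟨g, hg⟩ := sq_dvd_pow_prime_pow_succ_sub_expand p k f
  rw [sub_eq_iff_eq_add] at hg
  rw [hg, coeff_add, coeff_expand_smul _ (pow_ne_zero _ (Fact.out : p.Prime).ne_zero),
    ← map_natCast C, ← C_pow, coeff_C_mul]
  exact (Int.modEq_iff_dvd.mpr (by simp)).symm

end MvPolynomial

theorem stmt_7_general (n m : ℕ) (hn : 2 ≤ n)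
    (f : MvPolynomial (Fin m) ℤ) (i j : Fin m) (hij : i < j) :
    (2 : ℤ) ∣ MvPolynomial.coeff
        (Finsupp.single i (2 ^ (n - 1)) + Finsupp.single j (2 ^ (n - 1))) (f ^ 2 ^ n) ∧
    MvPolynomial.coeff
        (Finsupp.single i (2 ^ (n - 1)) + Finsupp.single j (2 ^ (n - 1))) (f ^ 2 ^ n) / 2 ≡
      MvPolynomial.coeff 0 f *
          MvPolynomial.coeff (Finsupp.single i 1 + Finsupp.single j 1) f +
        MvPolynomial.coeff (Finsupp.single i 1) f *
          MvPolynomial.coeff (Finsupp.single j 1) f [ZMOD 2] := by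
  obtain ⟨k, rfl⟩ : ∃ k, n = k + 1 := ⟨n - 1, by omega⟩
  have h := MvPolynomial.coeff_smul_pow_prime_pow_succ_modEq 2 k f
    (Finsupp.single i 1 + Finsupp.single j 1)
  rw [MvPolynomial.coeff_single_add_single_sq_s7 hij.ne, smul_add, Finsupp.smul_single,
    Finsupp.smul_single, smul_eq_mul, mul_one] at h
  simp only [Nat.add_sub_cancel, Int.ModEq] at h ⊢
  push_cast at h
  constructor <;> omega

/-- The integer `c_{f^{2^n}}(x_i^{2^{n-1}} x_j^{2^{n-1}})/2` is congruent to
`c_f(1)·c_f(x_i x_j) + c_f(x_i)·c_f(x_j)` modulo `2`. -/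
theorem stmt_7 (n m : ℕ) (hn : 2 ≤ n) (hm : 2 ≤ m)
    (f : MvPolynomial (Fin m) ℤ) (i j : Fin m) (hij : i < j) :
    (2 : ℤ) ∣ MvPolynomial.coeff
        (Finsupp.single i (2 ^ (n - 1)) + Finsupp.single j (2 ^ (n - 1))) (f ^ 2 ^ n) ∧
    MvPolynomial.coeff
        (Finsupp.single i (2 ^ (n - 1)) + Finsupp.single j (2 ^ (n - 1))) (f ^ 2 ^ n) / 2 ≡
      MvPolynomial.coeff 0 f *
          MvPolynomial.coeff (Finsupp.single i 1 + Finsupp.single j 1) f +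
        MvPolynomial.coeff (Finsupp.single i 1) f *
          MvPolynomial.coeff (Finsupp.single j 1) f [ZMOD 2] :=
  stmt_7_general n m hn f i j hij
end

section
/- Let n ≥ 2 and m ≥ 1 be integers and let f ∈ R_m = ℤ[x_1, ..., x_m]. Then f^{2^n} ≡ ( Σ_α c_f(x^α)^{2^{n−1}} · (x^α)^{2^{n−1}} )^2 (mod 4 R_m), where the sum runs over all exponent vectors α with c_f(x^α) ≠ 0. -/
open MvPolynomial

lemma two_dvd_of_map_zero {σ : Type*} (p : MvPolynomial σ ℤ)
    (h : MvPolynomial.map (Int.castRingHom (ZMod 2)) p = 0) :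
    ∃ g, p = 2 * g := by
  have : (MvPolynomial.C 2 : MvPolynomial σ ℤ) ∣ p := by
    rw [MvPolynomial.C_dvd_iff_dvd_coeff]
    intro i
    have := congrArg (MvPolynomial.coeff i) h
    rw [MvPolynomial.coeff_map] at this
    simpa using (ZMod.intCast_zmod_eq_zero_iff_dvd _ 2).mp this
  obtain ⟨g, hg⟩ := this
  exact ⟨g, by simpa using hg⟩

lemma zmod2_pow (k : ℕ) (x : ZMod 2) : x ^ 2 ^ k = x := by
  induction k with
  | zero => simp
  | succ k ih =>
    have : Fact (Nat.Prime 2) := ⟨by norm_num⟩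
    rw [pow_succ, pow_mul, ih, ZMod.pow_card]

lemma map_pow_eq {σ : Type*} (k : ℕ) (f : MvPolynomial σ ℤ) :
    MvPolynomial.map (Int.castRingHom (ZMod 2)) (f ^ 2 ^ k) =
      MvPolynomial.map (Int.castRingHom (ZMod 2))
        (∑ α ∈ f.support,
          MvPolynomial.C (MvPolynomial.coeff α f ^ 2 ^ k) *
            (MvPolynomial.monomial α (1 : ℤ)) ^ 2 ^ k) := by
  set φ := Int.castRingHom (ZMod 2)
  have hF : MvPolynomial.map φ f =
      ∑ α ∈ f.support, MvPolynomial.monomial α (φ (f.coeff α)) := by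
    conv_lhs => rw [f.as_sum]
    rw [map_sum]
    exact Finset.sum_congr rfl fun α _ => MvPolynomial.map_monomial _ _ _
  rw [map_pow, hF]
  have := map_sum (iterateFrobenius (MvPolynomial σ (ZMod 2)) 2 k)
    (fun α => MvPolynomial.monomial α (φ (f.coeff α))) f.support
  simp only [iterateFrobenius_def] at this
  rw [this, map_sum]
  apply Finset.sum_congr rfl
  intro α _
  have h1 : (MvPolynomial.monomial α (φ (f.coeff α))) ^ 2 ^ k
      = MvPolynomial.monomial (2 ^ k • α) (φ (f.coeff α) ^ 2 ^ k) :=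
    MvPolynomial.monomial_pow
  have h2 : MvPolynomial.map φ (MvPolynomial.C (f.coeff α ^ 2 ^ k) *
      (MvPolynomial.monomial α (1:ℤ)) ^ 2 ^ k)
      = MvPolynomial.C (φ (f.coeff α) ^ 2 ^ k) * MvPolynomial.monomial (2 ^ k • α) 1 := by
    rw [MvPolynomial.monomial_pow, one_pow, _root_.map_mul, MvPolynomial.map_C, map_pow,
      MvPolynomial.map_monomial, map_one]
  rw [h1, h2, MvPolynomial.C_mul_monomial, mul_one]

/-- `f^(2^n) ≡ (∑_α c_f(x^α)^{2^{n-1}} (x^α)^{2^{n-1}})^2 mod 4 R_m`, the sum running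
over the exponent vectors `α` in the support of `f`. -/
theorem stmt_8 (n m : ℕ) (hn : 2 ≤ n) (hm : 1 ≤ m)
    (f : MvPolynomial (Fin m) ℤ) :
    ∃ g : MvPolynomial (Fin m) ℤ,
      f ^ 2 ^ n =
        (∑ α ∈ f.support,
            MvPolynomial.C (MvPolynomial.coeff α f ^ 2 ^ (n - 1)) *
              (MvPolynomial.monomial α (1 : ℤ)) ^ 2 ^ (n - 1)) ^ 2 + 4 * g := by
  set S := ∑ α ∈ f.support,
      MvPolynomial.C (MvPolynomial.coeff α f ^ 2 ^ (n - 1)) *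
        (MvPolynomial.monomial α (1 : ℤ)) ^ 2 ^ (n - 1) with hS
  obtain ⟨g₂, hg₂⟩ : ∃ g, f ^ 2 ^ (n - 1) - S = 2 * g := by
    apply two_dvd_of_map_zero
    rw [map_sub, map_pow_eq (n-1) f, sub_self]
  have hpow : f ^ 2 ^ n = (f ^ 2 ^ (n - 1)) ^ 2 := by
    have h2 : 2 ^ n = 2 ^ (n - 1) * 2 := by
      rw [← pow_succ]
      congr 1
      omega
    rw [h2, pow_mul]
  refine ⟨S * g₂ + g₂ ^ 2, ?_⟩
  have : f ^ 2 ^ (n - 1) = S + 2 * g₂ := by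
    have := sub_eq_iff_eq_add.mp hg₂
    rw [this]; ring
  rw [hpow, this]
  ring
end

section
/- Let n ≥ 2 and m ≥ 2 be integers and fix indices 1 ≤ i < j ≤ m. Then there is a unique additive group homomorphism π_{i,j} from J(2^n, R_m) (the subring of R_m = ℤ[x_1, ..., x_m] generated by all 2^n-th powers, viewed as an additive group) to ℤ/2ℤ such that for every f ∈ R_m, π_{i,j}(f^{2^n}) equals the residue mod 2 of the integer c_{f^{2^n}}(x_i x_j)/2^n + c_{f^{2^n}}(x_i^{2^{n−1}} x_j^{2^{n−1}})/2. -/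
/-!
The `2^n`-th powers form a multiplicative monoid, so the subring they generate is just the
additive group they generate. On each generator `f^(2^n)` the coefficient of `x_i x_j` is
divisible by `2^n` (it equals `2^n` times a coefficient of `f^(2^n-1) ∂f/∂x_i`), and the
coefficient of `x_i^(2^(n-1)) x_j^(2^(n-1))` is even (mod 2, `f^(2^n)` only has monomials whose
exponents are divisible by `2^n`). Both divisibilities pass to the additive closure, where the
two quotients are therefore additive; uniqueness holds because additive maps agreeing on
generators agree on the group they generate.
-/

open MvPolynomial

theorem MvPolynomial.expand_pow_zmod {σ : Type*} {p : ℕ} [Fact p.Prime] (n : ℕ)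
    (f : MvPolynomial σ (ZMod p)) : expand (p ^ n) f = f ^ p ^ n := by
  have : iterateFrobenius (ZMod p) p n = RingHom.id _ :=
    RingHom.ext fun x => by rw [iterateFrobenius_def, ZMod.pow_card_pow, RingHom.id_apply]
  rw [← map_iterateFrobenius_expand, this, map_id]

theorem MvPolynomial.prime_dvd_coeff_pow_prime_pow {σ : Type*} {p : ℕ} [Fact p.Prime] {n : ℕ}
    {d : σ →₀ ℕ} {k : σ} (hd : ¬ p ^ n ∣ d k) (f : MvPolynomial σ ℤ) :
    (p : ℤ) ∣ coeff d (f ^ p ^ n) := by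
  rw [← ZMod.intCast_zmod_eq_zero_iff_dvd, ← eq_intCast (Int.castRingHom (ZMod p)), ← coeff_map,
    map_pow, ← expand_pow_zmod, coeff_expand_of_not_dvd _ hd]

theorem MvPolynomial.natCast_dvd_coeff_single_add_single_pow_s10 {σ R : Type*} [CommRing R]
    {i j : σ} (hij : i ≠ j) (N : ℕ) (f : MvPolynomial σ R) :
    (N : R) ∣ coeff (Finsupp.single i 1 + Finsupp.single j 1) (f ^ N) := by
  have h := coeff_pderiv (i := i) (f ^ N) (Finsupp.single j 1)
  rw [Finsupp.single_eq_of_ne hij, Nat.cast_zero, zero_add, mul_one, add_comm] at h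
  rw [← h, pderiv_pow, mul_assoc, ← map_natCast C, coeff_C_mul]
  exact dvd_mul_right _ _

theorem Subring.mem_closure_range_pow_iff {R : Type*} [CommRing R] {k : ℕ} {x : R} :
    x ∈ Subring.closure (Set.range fun y : R => y ^ k) ↔
      x ∈ AddSubgroup.closure (Set.range fun y : R => y ^ k) := by
  have h : (Set.range fun y : R => y ^ k) = (MonoidHom.mrange (powMonoidHom k : R →* R) : Set R) :=
    (MonoidHom.coe_mrange (powMonoidHom k : R →* R)).symm
  rw [Subring.mem_closure_iff, h, Submonoid.closure_eq]

theorem AddSubgroup.dvd_of_mem_closure {G : Type*} [AddGroup G] (φ : G →+ ℤ) {a : ℤ} {s : Set G}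
    (hs : ∀ x ∈ s, a ∣ φ x) {x : G} (hx : x ∈ AddSubgroup.closure s) : a ∣ φ x := by
  have : AddSubgroup.closure s ≤ (AddSubgroup.zmultiples a).comap φ :=
    (AddSubgroup.closure_le _).2 fun x hx => Int.mem_zmultiples_iff.2 (hs x hx)
  exact Int.mem_zmultiples_iff.1 (this hx)

theorem AddMonoidHom.ext_of_mem_iff_mem_closure {G A S : Type*} [AddGroup G] [AddGroup A]
    [SetLike S G] [AddSubgroupClass S G] {H : S} {s : Set G}
    (hH : ∀ x, x ∈ H ↔ x ∈ AddSubgroup.closure s) {φ ψ : H →+ A}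
    (h : ∀ x (hx : x ∈ s), φ ⟨x, (hH x).2 (AddSubgroup.subset_closure hx)⟩ =
      ψ ⟨x, (hH x).2 (AddSubgroup.subset_closure hx)⟩) : φ = ψ := by
  ext ⟨x, hx⟩
  induction (hH x).1 hx using AddSubgroup.closure_induction with
  | mem x hxs => exact h x hxs
  | zero => exact (map_zero φ).trans (map_zero ψ).symm
  | add x y hx' hy' ihx ihy =>
    have hsum : (⟨x + y, hx⟩ : H) = ⟨x, (hH x).2 hx'⟩ + ⟨y, (hH y).2 hy'⟩ := rfl
    rw [hsum, map_add, map_add, ihx, ihy]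
  | neg x hx' ihx =>
    have hneg : (⟨-x, hx⟩ : H) = -⟨x, (hH x).2 hx'⟩ := rfl
    rw [hneg, map_neg, map_neg, ihx]

theorem stmt_10_general (n m : ℕ) (hn : 2 ≤ n) (i j : Fin m) (hij : i < j) :
    ∃! π : (Subring.closure
        (Set.range fun g : MvPolynomial (Fin m) ℤ => g ^ (2 ^ n))) →+ ZMod 2,
      ∀ f : MvPolynomial (Fin m) ℤ,
        π ⟨f ^ 2 ^ n, Subring.subset_closure ⟨f, rfl⟩⟩ =
          ((MvPolynomial.coeff (Finsupp.single i 1 + Finsupp.single j 1) (f ^ 2 ^ n) / 2 ^ n +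
              MvPolynomial.coeff
                (Finsupp.single i (2 ^ (n - 1)) + Finsupp.single j (2 ^ (n - 1)))
                (f ^ 2 ^ n) / 2 : ℤ) : ZMod 2) := by
  set T := Subring.closure (Set.range fun g : MvPolynomial (Fin m) ℤ => g ^ (2 ^ n))
  set d₁ : Fin m →₀ ℕ := Finsupp.single i 1 + Finsupp.single j 1
  set d₂ : Fin m →₀ ℕ := Finsupp.single i (2 ^ (n - 1)) + Finsupp.single j (2 ^ (n - 1))
  have hd₁ : ∀ x ∈ T, (2 ^ n : ℤ) ∣ coeff d₁ x := fun x hx =>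
    AddSubgroup.dvd_of_mem_closure (coeffAddMonoidHom d₁)
      (by rintro _ ⟨f, rfl⟩; exact_mod_cast natCast_dvd_coeff_single_add_single_pow_s10 hij.ne _ f)
      (Subring.mem_closure_range_pow_iff.1 hx)
  have hd₂ : ∀ x ∈ T, (2 : ℤ) ∣ coeff d₂ x := fun x hx =>
    AddSubgroup.dvd_of_mem_closure (coeffAddMonoidHom d₂)
      (by
        rintro _ ⟨f, rfl⟩
        have hd₂i : d₂ i = 2 ^ (n - 1) := by simp [d₂, hij.ne']
        refine prime_dvd_coeff_pow_prime_pow (k := i) ?_ f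
        rw [hd₂i, Nat.pow_dvd_pow_iff_le_right Nat.one_lt_two]
        omega)
      (Subring.mem_closure_range_pow_iff.1 hx)
  refine ⟨AddMonoidHom.mk' (fun x => ((coeff d₁ x / 2 ^ n + coeff d₂ x / 2 : ℤ) : ZMod 2)) ?_,
    fun f => rfl, fun π hπ => ?_⟩
  · intro x y
    simp only [Subring.coe_add, coeff_add, Int.add_ediv_of_dvd_right (hd₁ y y.2),
      Int.add_ediv_of_dvd_right (hd₂ y y.2)]
    push_cast
    ring
  · refine AddMonoidHom.ext_of_mem_iff_mem_closure (fun _ => Subring.mem_closure_range_pow_iff) ?_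
    rintro _ ⟨f, rfl⟩
    exact hπ f

/-- There is a unique additive group homomorphism `π_{i,j}` from the subring of
`ℤ[x₁,…,xₘ]` generated by all `2^n`-th powers to `ℤ/2ℤ` sending each generator `f^(2^n)`
to the residue mod 2 of `c_{f^{2^n}}(x_i x_j)/2^n + c_{f^{2^n}}(x_i^{2^{n-1}} x_j^{2^{n-1}})/2`. -/
theorem stmt_10 (n m : ℕ) (hn : 2 ≤ n) (hm : 2 ≤ m) (i j : Fin m) (hij : i < j) :
    ∃! π : (Subring.closure
        (Set.range fun g : MvPolynomial (Fin m) ℤ => g ^ (2 ^ n))) →+ ZMod 2,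
      ∀ f : MvPolynomial (Fin m) ℤ,
        π ⟨f ^ 2 ^ n, Subring.subset_closure ⟨f, rfl⟩⟩ =
          ((MvPolynomial.coeff (Finsupp.single i 1 + Finsupp.single j 1) (f ^ 2 ^ n) / 2 ^ n +
              MvPolynomial.coeff
                (Finsupp.single i (2 ^ (n - 1)) + Finsupp.single j (2 ^ (n - 1)))
                (f ^ 2 ^ n) / 2 : ℤ) : ZMod 2) :=
  stmt_10_general n m hn i j hij
end

section
/- Let n ≥ 2 and m ≥ 2 be integers, fix 1 ≤ i' < j' ≤ m, and set f = x_{i'} + x_{j'} ∈ R_m = ℤ[x_1, ..., x_m]. Then for all 1 ≤ i < j ≤ m, the integer c_{f^{2^n}}(x_i x_j)/2^n + c_{f^{2^n}}(x_i^{2^{n−1}} x_j^{2^{n−1}})/2 is odd if (i, j) = (i', j') and even otherwise. -/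
/-!
Since `f = x_{i'} + x_{j'}` is homogeneous of degree one, `f^{2^n}` has no monomial of degree
`2 < 2^n`, so the first summand vanishes. The only monomials of `f^{2^n}` are
`x_{i'}^k x_{j'}^{2^n - k}`; hence the second coefficient is `0` unless `(i, j) = (i', j')`, where it
is the central binomial coefficient `C(2^n, 2^{n-1})`. By Kummer's theorem its `2`-adic valuation
is `1`, so its half is odd.
-/

open MvPolynomial Finsupp

namespace Nat

theorem digits_sum_base_pow_mul {p : ℕ} (hp : 1 < p) (s : ℕ) {d : ℕ} (hd0 : d ≠ 0)
    (hdp : d < p) : (p.digits (p ^ s * d)).sum = d := by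
  simp [digits_base_pow_mul hp (pos_of_ne_zero hd0), digits_of_lt p d hd0 hdp]

theorem padicValNat_choose_prime_pow_succ (p : ℕ) [hp : Fact p.Prime] (s : ℕ) :
    padicValNat p ((p ^ (s + 1)).choose (p ^ s)) = 1 := by
  have h1 := hp.out.one_lt
  have hpow (t : ℕ) : (p.digits (p ^ t)).sum = 1 := by
    simpa using digits_sum_base_pow_mul h1 t one_ne_zero h1
  have hsub : (p.digits (p ^ (s + 1) - p ^ s)).sum = p - 1 := by
    rw [show p ^ (s + 1) - p ^ s = p ^ s * (p - 1) by rw [Nat.mul_sub, pow_succ, mul_one]]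
    exact digits_sum_base_pow_mul h1 s (by omega) (by omega)
  have kummer := sub_one_mul_padicValNat_choose_eq_sub_sum_digits (p := p)
    (pow_le_pow_right₀ h1.le s.le_succ : p ^ s ≤ p ^ (s + 1))
  rw [hpow, hpow, hsub, Nat.add_sub_cancel_left] at kummer
  exact (Nat.mul_eq_left (by omega)).1 kummer

theorem not_dvd_div_self_of_padicValNat_eq_one {p c : ℕ} [Fact p.Prime]
    (h : padicValNat p c = 1) : ¬ p ∣ c / p := by
  have hc : c ≠ 0 := by rintro rfl; simp at h
  intro hdvd
  have hsq : p ^ 2 ∣ c := by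
    rw [sq]
    exact Nat.mul_dvd_of_dvd_div (dvd_of_one_le_padicValNat (by omega)) hdvd
  have := (padicValNat_dvd_iff_le hc).1 hsq
  omega

theorem odd_choose_two_pow_succ_two_pow_div_two (s : ℕ) :
    Odd ((2 ^ (s + 1)).choose (2 ^ s) / 2) :=
  Nat.odd_iff.2 <| Nat.two_dvd_ne_zero.1 <|
    not_dvd_div_self_of_padicValNat_eq_one (padicValNat_choose_prime_pow_succ 2 s)

end Nat

namespace MvPolynomial

variable {σ R : Type*} [CommSemiring R]

theorem coeff_X_add_X_pow_eq_zero_of_degree_ne (a b : σ) {d : σ →₀ ℕ} {N : ℕ}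
    (hd : d.degree ≠ N) : coeff d ((X a + X b : MvPolynomial σ R) ^ N) = 0 := by
  have hhom : ((X a + X b : MvPolynomial σ R) ^ N).IsHomogeneous N := by
    simpa using ((isHomogeneous_X R a).add (isHomogeneous_X R b)).pow N
  exact hhom.coeff_eq_zero hd

theorem coeff_X_add_X_pow_eq_zero_of_ne_of_ne [Nontrivial R] {a b c : σ} {d : σ →₀ ℕ}
    (hd : d c ≠ 0) (ha : c ≠ a) (hb : c ≠ b) (N : ℕ) :
    coeff d ((X a + X b : MvPolynomial σ R) ^ N) = 0 := by
  classical
  by_contra h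
  have hc : c ∈ ((X a + X b : MvPolynomial σ R) ^ N).vars :=
    (mem_vars_iff_mem_support c).2 ⟨d, mem_support_iff.2 h, Finsupp.mem_support_iff.2 hd⟩
  have := vars_add_subset _ _ (vars_pow _ _ hc)
  simp_all

theorem coeff_single_add_single_X_add_X_pow {a b : σ} (hab : a ≠ b) (k l : ℕ) :
    coeff (single a k + single b l) ((X a + X b : MvPolynomial σ R) ^ (k + l)) =
      (k + l).choose k := by
  classical
  have hterm (i : ℕ) : (X a : MvPolynomial σ R) ^ i * X b ^ (k + l - i) *
      ((k + l).choose i : MvPolynomial σ R) =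
        monomial (single a i + single b (k + l - i)) ((k + l).choose i : R) := by
    rw [X_pow_eq_monomial, X_pow_eq_monomial, monomial_mul, one_mul, ← C_eq_coe_nat, mul_comm,
      C_mul_monomial, mul_one]
  rw [add_pow, coeff_sum, Finset.sum_eq_single k]
  · rw [hterm, coeff_monomial, Nat.add_sub_cancel_left, if_pos rfl]
  · intro i _ hik
    rw [hterm, coeff_monomial, if_neg]
    intro h
    exact hik (by simpa [hab] using DFunLike.congr_fun h a)
  · intro hk
    simp at hk

end MvPolynomial

theorem stmt_12_general (n m : ℕ) (hn : 2 ≤ n) (i' j' : Fin m) (hij' : i' < j') :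
    ∀ i j : Fin m, i < j →
      (((i, j) = (i', j') →
          Odd (MvPolynomial.coeff (Finsupp.single i 1 + Finsupp.single j 1)
                ((MvPolynomial.X i' + MvPolynomial.X j' : MvPolynomial (Fin m) ℤ) ^ 2 ^ n) /
              2 ^ n +
            MvPolynomial.coeff
                (Finsupp.single i (2 ^ (n - 1)) + Finsupp.single j (2 ^ (n - 1)))
                ((MvPolynomial.X i' + MvPolynomial.X j' : MvPolynomial (Fin m) ℤ) ^ 2 ^ n) /
              2)) ∧
        ((i, j) ≠ (i', j') →
          Even (MvPolynomial.coeff (Finsupp.single i 1 + Finsupp.single j 1)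
                ((MvPolynomial.X i' + MvPolynomial.X j' : MvPolynomial (Fin m) ℤ) ^ 2 ^ n) /
              2 ^ n +
            MvPolynomial.coeff
                (Finsupp.single i (2 ^ (n - 1)) + Finsupp.single j (2 ^ (n - 1)))
                ((MvPolynomial.X i' + MvPolynomial.X j' : MvPolynomial (Fin m) ℤ) ^ 2 ^ n) /
              2))) := by
  intro i j hij
  obtain ⟨s, rfl⟩ : ∃ s, n = s + 2 := ⟨n - 2, by omega⟩
  have hquadratic : coeff (single i 1 + single j 1)
      ((X i' + X j' : MvPolynomial (Fin m) ℤ) ^ 2 ^ (s + 2)) = 0 :=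
    coeff_X_add_X_pow_eq_zero_of_degree_ne _ _ (by simp [pow_succ])
  rw [hquadratic, Int.zero_ediv, zero_add, show s + 2 - 1 = s + 1 from rfl]
  constructor
  · intro h
    obtain ⟨rfl, rfl⟩ := Prod.mk.inj h
    rw [show 2 ^ (s + 2) = 2 ^ (s + 1) + 2 ^ (s + 1) by ring,
      coeff_single_add_single_X_add_X_pow hij.ne, ← two_mul, ← pow_succ']
    exact_mod_cast Nat.odd_choose_two_pow_succ_two_pow_div_two (s + 1)
  · intro h
    obtain ⟨c, hc, hci, hcj⟩ : ∃ c, (c = i ∨ c = j) ∧ c ≠ i' ∧ c ≠ j' := by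
      simp only [ne_eq, Prod.mk.injEq] at h
      by_cases hi : i ≠ i' ∧ i ≠ j'
      · exact ⟨i, .inl rfl, hi⟩
      · exact ⟨j, .inr rfl, by omega⟩
    rw [coeff_X_add_X_pow_eq_zero_of_ne_of_ne _ hci hcj]
    · simp
    · rcases hc with rfl | rfl <;> simp [hij.ne, hij.ne']

/-- For `f = x_{i'} + x_{j'}`, the integer
`c_{f^{2^n}}(x_i x_j)/2^n + c_{f^{2^n}}(x_i^{2^{n-1}} x_j^{2^{n-1}})/2`
is odd when `(i,j) = (i',j')` and even otherwise. -/
theorem stmt_12 (n m : ℕ) (hn : 2 ≤ n) (hm : 2 ≤ m) (i' j' : Fin m) (hij' : i' < j') :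
    ∀ i j : Fin m, i < j →
      (((i, j) = (i', j') →
          Odd (MvPolynomial.coeff (Finsupp.single i 1 + Finsupp.single j 1)
                ((MvPolynomial.X i' + MvPolynomial.X j' : MvPolynomial (Fin m) ℤ) ^ 2 ^ n) /
              2 ^ n +
            MvPolynomial.coeff
                (Finsupp.single i (2 ^ (n - 1)) + Finsupp.single j (2 ^ (n - 1)))
                ((MvPolynomial.X i' + MvPolynomial.X j' : MvPolynomial (Fin m) ℤ) ^ 2 ^ n) /
              2)) ∧
        ((i, j) ≠ (i', j') →
          Even (MvPolynomial.coeff (Finsupp.single i 1 + Finsupp.single j 1)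
                ((MvPolynomial.X i' + MvPolynomial.X j' : MvPolynomial (Fin m) ℤ) ^ 2 ^ n) /
              2 ^ n +
            MvPolynomial.coeff
                (Finsupp.single i (2 ^ (n - 1)) + Finsupp.single j (2 ^ (n - 1)))
                ((MvPolynomial.X i' + MvPolynomial.X j' : MvPolynomial (Fin m) ℤ) ^ 2 ^ n) /
              2))) :=
  stmt_12_general n m hn i' j' hij'
end

section
/- Let n ≥ 2 and m ≥ 2 be integers. Define Π: J(2^n, R_m) → (ℤ/2ℤ)^{P}, where P is the set of pairs (i, j) with 1 ≤ i < j ≤ m, to be the additive group homomorphism whose (i, j)-component sends each generator f^{2^n} (f ∈ R_m) to the residue mod 2 of c_{f^{2^n}}(x_i x_j)/2^n + c_{f^{2^n}}(x_i^{2^{n−1}} x_j^{2^{n−1}})/2. Then Π is surjective onto (ℤ/2ℤ)^{P}, a group of order 2^{m(m−1)/2}. -/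
/-!
The generator `(x_i + x_j)^(2^n)` is sent by `Π` to the basis vector `e_(i,j)`. Its coefficient
at `x_i x_j` vanishes because `2^n ≠ 2`; its coefficient at `x_i^(2^(n-1)) x_j^(2^(n-1))` is
`C(2^n, 2^(n-1))`, which is twice an odd number by Kummer's theorem; and it has no monomial
involving a variable other than `x_i`, `x_j`, so the other components vanish. The vectors
`e_(i,j)` generate `(ℤ/2ℤ)^P` additively.
-/

theorem AddMonoidHom.surjective_of_forall_single_one_mem_range {M ι : Type*} [AddCommMonoid M]
    [Fintype ι] [DecidableEq ι] {k : ℕ} [NeZero k] (φ : M →+ ι → ZMod k)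
    (h : ∀ i, ∃ x, φ x = Pi.single i 1) : Function.Surjective φ := by
  intro v
  choose x hx using h
  refine ⟨∑ i, (v i).val • x i, ?_⟩
  conv_rhs => rw [← Finset.univ_sum_single v]
  simp only [map_sum, map_nsmul, hx]
  refine Finset.sum_congr rfl fun i _ => ?_
  rw [← Pi.single_smul', nsmul_eq_mul, mul_one, ZMod.natCast_zmod_val]

theorem exists_ne_of_pair_ne {α : Type*} [LinearOrder α] {i j k l : α} (hij : i < j)
    (hkl : k < l) (hne : (k, l) ≠ (i, j)) : ∃ v, (v = k ∨ v = l) ∧ v ≠ i ∧ v ≠ j := by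
  by_cases hki : k = i
  · subst hki
    exact ⟨l, .inr rfl, hkl.ne', fun hlj => hne (by rw [hlj])⟩
  by_cases hkj : k = j
  · subst hkj
    exact ⟨l, .inr rfl, (hij.trans hkl).ne', hkl.ne'⟩
  exact ⟨k, .inl rfl, hki, hkj⟩

/-- Kummer: adding `2^k + 2^k` in base 2 produces exactly one carry. -/
theorem padicValNat_two_choose_two_pow_succ (k : ℕ) :
    padicValNat 2 ((2 ^ (k + 1)).choose (2 ^ k)) = 1 := by
  have hdigits (j : ℕ) : (Nat.digits 2 (2 ^ j)).sum = 1 := by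
    rw [← mul_one (2 ^ j), Nat.digits_base_pow_mul one_lt_two one_pos]
    simp
  have kummer := sub_one_mul_padicValNat_choose_eq_sub_sum_digits' (p := 2) (n := 2 ^ k)
    (k := 2 ^ k)
  rw [← two_mul, ← pow_succ', hdigits, hdigits] at kummer
  omega

theorem odd_choose_two_pow_succ_div_two (k : ℕ) :
    Odd ((2 ^ (k + 1)).choose (2 ^ k) / 2) := by
  have hne : (2 ^ (k + 1)).choose (2 ^ k) ≠ 0 :=
    (Nat.choose_pos (Nat.pow_le_pow_right two_pos k.le_succ)).ne'
  have h2 : 2 ∣ (2 ^ (k + 1)).choose (2 ^ k) := by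
    simpa using (padicValNat_dvd_iff_le (p := 2) hne (n := 1)).2
      (padicValNat_two_choose_two_pow_succ k).ge
  have h4 : ¬ 2 ^ 2 ∣ (2 ^ (k + 1)).choose (2 ^ k) := by
    rw [padicValNat_dvd_iff_le hne, padicValNat_two_choose_two_pow_succ]
    omega
  rw [Nat.odd_iff]
  omega

namespace MvPolynomial

open Finsupp

variable {σ R : Type*} [CommSemiring R] {i j : σ}

theorem coeff_X_add_X_pow [DecidableEq σ] (N : ℕ) (d : σ →₀ ℕ) :
    coeff d ((X i + X j : MvPolynomial σ R) ^ N) =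
      ∑ k ∈ Finset.range (N + 1),
        if single i k + single j (N - k) = d then (N.choose k : R) else 0 := by
  rw [add_pow, coeff_sum]
  refine Finset.sum_congr rfl fun k _ => ?_
  rw [X_pow_eq_monomial, X_pow_eq_monomial, monomial_mul, mul_one, ← map_natCast C,
    mul_comm, C_mul_monomial, mul_one, coeff_monomial]

theorem coeff_X_add_X_pow_eq_zero {d : σ →₀ ℕ} {v : σ} (hv : d v ≠ 0) (hvi : v ≠ i)
    (hvj : v ≠ j) (N : ℕ) : coeff d ((X i + X j : MvPolynomial σ R) ^ N) = 0 := by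
  classical
  rw [coeff_X_add_X_pow]
  refine Finset.sum_eq_zero fun k _ => if_neg fun h => hv ?_
  simp [← h, hvi.symm, hvj.symm]

theorem coeff_single_add_single_X_add_X_pow_s13 (hij : i ≠ j) (N a b : ℕ) :
    coeff (single i a + single j b) ((X i + X j : MvPolynomial σ R) ^ N) =
      if a + b = N then (N.choose a : R) else 0 := by
  classical
  have key (k : ℕ) :
      single i k + single j (N - k) = single i a + single j b ↔ k = a ∧ N - k = b := by
    refine ⟨fun h => ?_, by rintro ⟨rfl, rfl⟩; rfl⟩
    have hi := DFunLike.congr_fun h i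
    have hj := DFunLike.congr_fun h j
    simp only [Finsupp.add_apply, single_eq_same, single_eq_of_ne hij,
      single_eq_of_ne hij.symm] at hi hj
    omega
  simp_rw [coeff_X_add_X_pow, key, ite_and, Finset.sum_ite_eq', Finset.mem_range]
  split_ifs <;> first | rfl | omega

/-- The `(i, j)`-component of `Π` on a generator `g = f^(2^n)`. -/
noncomputable def pairResidue (n : ℕ) (g : MvPolynomial σ ℤ) (i j : σ) : ZMod 2 :=
  ((coeff (single i 1 + single j 1) g / 2 ^ n +
    coeff (single i (2 ^ (n - 1)) + single j (2 ^ (n - 1))) g / 2 : ℤ) : ZMod 2)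

theorem pairResidue_X_add_X_pow [LinearOrder σ] {n : ℕ} (hn : 2 ≤ n)
    (p q : {p : σ × σ // p.1 < p.2}) :
    pairResidue n ((X p.1.1 + X p.1.2) ^ 2 ^ n) q.1.1 q.1.2 =
      (Pi.single p 1 : {p : σ × σ // p.1 < p.2} → ZMod 2) q := by
  obtain ⟨k, rfl⟩ : ∃ k, n = k + 1 := ⟨n - 1, by omega⟩
  unfold pairResidue
  rw [Nat.add_sub_cancel]
  by_cases hqp : q = p
  · subst hqp
    have h4 : 2 ^ 2 ≤ 2 ^ (k + 1) := Nat.pow_le_pow_right two_pos hn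
    rw [Pi.single_eq_same, coeff_single_add_single_X_add_X_pow_s13 q.2.ne,
      coeff_single_add_single_X_add_X_pow_s13 q.2.ne, if_neg (by omega),
      if_pos (by rw [pow_succ]; ring), Int.zero_ediv, zero_add]
    exact_mod_cast ZMod.natCast_eq_one_iff_odd.2 (odd_choose_two_pow_succ_div_two k)
  · obtain ⟨v, hv, hvi, hvj⟩ := exists_ne_of_pair_ne p.2 q.2 fun h => hqp (Subtype.ext h)
    have hcoeff (a : ℕ) (ha : a ≠ 0) : coeff (single q.1.1 a + single q.1.2 a)
        ((X p.1.1 + X p.1.2 : MvPolynomial σ ℤ) ^ 2 ^ (k + 1)) = 0 :=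
      coeff_X_add_X_pow_eq_zero
        (by rcases hv with rfl | rfl <;> simp [q.2.ne, q.2.ne', ha]) hvi hvj _
    rw [Pi.single_eq_of_ne hqp, hcoeff 1 one_ne_zero, hcoeff _ (by positivity)]
    simp

end MvPolynomial

theorem stmt_13_general (n m : ℕ) (hn : 2 ≤ n)
    (Pi : (Subring.closure
        (Set.range fun g : MvPolynomial (Fin m) ℤ => g ^ (2 ^ n))) →+
          ({p : Fin m × Fin m // p.1 < p.2} → ZMod 2))
    (hPi : ∀ (f : MvPolynomial (Fin m) ℤ) (p : {p : Fin m × Fin m // p.1 < p.2}),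
      Pi ⟨f ^ 2 ^ n, Subring.subset_closure ⟨f, rfl⟩⟩ p =
        ((MvPolynomial.coeff (Finsupp.single p.1.1 1 + Finsupp.single p.1.2 1)
              (f ^ 2 ^ n) / 2 ^ n +
            MvPolynomial.coeff
              (Finsupp.single p.1.1 (2 ^ (n - 1)) + Finsupp.single p.1.2 (2 ^ (n - 1)))
              (f ^ 2 ^ n) / 2 : ℤ) : ZMod 2)) :
    Function.Surjective Pi ∧
      Nat.card ({p : Fin m × Fin m // p.1 < p.2} → ZMod 2) = 2 ^ (m * (m - 1) / 2) := by
  have hgen (p : {p : Fin m × Fin m // p.1 < p.2}) :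
      Pi ⟨_, Subring.subset_closure ⟨MvPolynomial.X p.1.1 + MvPolynomial.X p.1.2, rfl⟩⟩ =
        _root_.Pi.single p 1 := by
    funext q
    rw [hPi]
    exact MvPolynomial.pairResidue_X_add_X_pow hn p q
  refine ⟨Pi.surjective_of_forall_single_one_mem_range fun p => ⟨_, hgen p⟩, ?_⟩
  rw [Nat.card_eq_fintype_card, Fintype.card_fun, ZMod.card, Fintype.card_subtype,
    Fintype.card_product_filter_lt, Fintype.card_fin, Nat.choose_two_right]

/-- Any additive homomorphism `Π` from the subring of `ℤ[x₁,…,xₘ]` generated by `2^n`-th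
powers to `(ℤ/2ℤ)^P`, `P` the set of pairs `i < j`, whose `(i,j)`-component sends each
generator `f^(2^n)` to the residue mod 2 of
`c_{f^{2^n}}(x_i x_j)/2^n + c_{f^{2^n}}(x_i^{2^{n-1}} x_j^{2^{n-1}})/2`,
is surjective onto that group of order `2^(m(m-1)/2)`. -/
theorem stmt_13 (n m : ℕ) (hn : 2 ≤ n) (hm : 2 ≤ m)
    (Pi : (Subring.closure
        (Set.range fun g : MvPolynomial (Fin m) ℤ => g ^ (2 ^ n))) →+
          ({p : Fin m × Fin m // p.1 < p.2} → ZMod 2))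
    (hPi : ∀ (f : MvPolynomial (Fin m) ℤ) (p : {p : Fin m × Fin m // p.1 < p.2}),
      Pi ⟨f ^ 2 ^ n, Subring.subset_closure ⟨f, rfl⟩⟩ p =
        ((MvPolynomial.coeff (Finsupp.single p.1.1 1 + Finsupp.single p.1.2 1)
              (f ^ 2 ^ n) / 2 ^ n +
            MvPolynomial.coeff
              (Finsupp.single p.1.1 (2 ^ (n - 1)) + Finsupp.single p.1.2 (2 ^ (n - 1)))
              (f ^ 2 ^ n) / 2 : ℤ) : ZMod 2)) :
    Function.Surjective Pi ∧
      Nat.card ({p : Fin m × Fin m // p.1 < p.2} → ZMod 2) = 2 ^ (m * (m - 1) / 2) :=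
  stmt_13_general n m hn Pi hPi
end
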